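/- Let Ω be a conformal α-regular domain about a bounded simply connected domain Ω' (2 < α < ∞), with conformal mapping φ : Ω' → Ω. Then for every function f ∈ W^{1,2}_0(Ω) and every s ≥ 1, the Poincaré–Sobolev inequality ‖f‖_{L^s(Ω)} ≤ A_{s,2}(Ω) ‖∇f‖_{L²(Ω)} holds with constant satisfying A_{s,2}(Ω) ≤ A_{αs/(α−2),2}(Ω') · ‖φ' | L^α(Ω')‖^{2/s}, where ‖φ' | L^α(Ω')‖ = (∬_{Ω'} |φ'(u,v)|^α du dv)^{1/α}. -/

import Mathlib

open MeasureTheory Real Set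
open scoped ENNReal NNReal

noncomputable section

/-- A smooth real-valued function compactly supported inside `Ω`
(the test functions whose closure in the corresponding (semi-)norm gives
`W^{1,2}_0(Ω)`, resp. `L^{1,2}_0(Ω)`). -/
def IsTestFun (Ω : Set ℂ) (f : ℂ → ℝ) : Prop :=
  ContDiff ℝ (⊤ : ℕ∞) f ∧ HasCompactSupport f ∧ tsupport f ⊆ Ω

/-- A conformal mapping of `Ω'` onto `Ω`: a holomorphic bijection of `Ω'`
onto `Ω` with nonvanishing derivative. -/
def ConformalOn (φ : ℂ → ℂ) (Ω' Ω : Set ℂ) : Prop :=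
  DifferentiableOn ℂ φ Ω' ∧ Set.InjOn φ Ω' ∧ φ '' Ω' = Ω ∧ ∀ z ∈ Ω', deriv φ z ≠ 0

/-- The first Dirichlet eigenvalue of the Laplacian on `Ω`, as the infimum of the
Rayleigh quotients over (a dense class of) nonzero functions of `W^{1,2}_0(Ω)`. -/
def firstEigenvalue (Ω : Set ℂ) : ℝ :=
  sInf ((fun f => (∫ z in Ω, ‖fderiv ℝ f z‖ ^ 2) / (∫ z in Ω, (f z) ^ 2)) ''
    {f : ℂ → ℝ | IsTestFun Ω f ∧ f ≠ 0})

/-- The best constant `A_{r,2}(Ω)` in the Poincaré–Sobolev inequality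
`‖f‖_{L^r(Ω)} ≤ A ‖∇f‖_{L²(Ω)}` for `f ∈ W^{1,2}_0(Ω)`. -/
def bestPSConst (Ω : Set ℂ) (r : ℝ) : ℝ :=
  sInf {A : ℝ | 0 ≤ A ∧ ∀ f : ℂ → ℝ, IsTestFun Ω f →
    (∫ z in Ω, |f z| ^ r) ^ (1 / r) ≤ A * (∫ z in Ω, ‖fderiv ℝ f z‖ ^ 2) ^ (1/2 : ℝ)}

/-- The `L^∞(D)`-norm (essential supremum of the modulus) of `g : ℂ → ℂ` on `D`. -/
def linfNorm (D : Set ℂ) (g : ℂ → ℂ) : ℝ :=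
  (essSup (fun z => (‖g z‖₊ : ℝ≥0∞)) (volume.restrict D)).toReal

attribute [local instance] Classical.propDecidable

noncomputable section

/-- Multiplication by `c` as an `ℝ`-linear continuous map `ℂ → ℂ`. -/
def mulCLM (c : ℂ) : ℂ →L[ℝ] ℂ :=
  ((1 : ℂ →L[ℂ] ℂ).smulRight c).restrictScalars ℝ

@[simp] lemma mulCLM_apply (c w : ℂ) : mulCLM c w = w * c := by
  simp [mulCLM, smul_eq_mul]

lemma norm_mulCLM (c : ℂ) : ‖mulCLM c‖ = ‖c‖ := by
  rw [mulCLM, ContinuousLinearMap.norm_restrictScalars]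
  rw [ContinuousLinearMap.norm_smulRight_apply]
  simp

lemma det_mulCLM (c : ℂ) : LinearMap.det ((mulCLM c) : ℂ →ₗ[ℝ] ℂ) = Complex.normSq c := by
  have : ((mulCLM c) : ℂ →ₗ[ℝ] ℂ) = Algebra.lmul ℝ ℂ c := by
    ext w
    simp [mul_comm]
  rw [this, ← Algebra.norm_apply, Algebra.norm_complex_apply]

lemma abs_det_mulCLM (c : ℂ) : |LinearMap.det ((mulCLM c) : ℂ →ₗ[ℝ] ℂ)| = ‖c‖ ^ (2:ℝ) := by
  rw [det_mulCLM, abs_of_nonneg (Complex.normSq_nonneg c)]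
  rw [← Complex.sq_norm]
  rw [show ((2:ℝ) = ((2:ℕ):ℝ)) by norm_num, Real.rpow_natCast]

lemma opNorm_comp_mulCLM (L : ℂ →L[ℝ] ℝ) (c : ℂ) :
    ‖L.comp (mulCLM c)‖ = ‖L‖ * ‖c‖ := by
  rcases eq_or_ne c 0 with rfl | hc
  · have : L.comp (mulCLM 0) = 0 := by ext w; simp
    simp [this]
  · refine le_antisymm ((L.opNorm_comp_le _).trans (by rw [norm_mulCLM])) ?_
    have key : L = (L.comp (mulCLM c)).comp (mulCLM c⁻¹) := by
      ext w; simp [hc]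
    calc ‖L‖ * ‖c‖ = ‖(L.comp (mulCLM c)).comp (mulCLM c⁻¹)‖ * ‖c‖ := by rw [← key]
      _ ≤ ‖L.comp (mulCLM c)‖ * ‖mulCLM c⁻¹‖ * ‖c‖ := by
          gcongr; exact ContinuousLinearMap.opNorm_comp_le _ _
      _ = ‖L.comp (mulCLM c)‖ := by
          rw [norm_mulCLM, norm_inv, mul_assoc, inv_mul_cancel₀ (by simpa using hc), mul_one]

variable {Ω' : Set ℂ} {φ : ℂ → ℂ}

lemma hasFDerivAt_mul (hΩ' : IsOpen Ω') (hd : DifferentiableOn ℂ φ Ω') {z : ℂ} (hz : z ∈ Ω') :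
    HasFDerivAt φ (((1 : ℂ →L[ℂ] ℂ).smulRight (deriv φ z)).restrictScalars ℝ) z := by
  have h1 : DifferentiableAt ℂ φ z := hd.differentiableAt (hΩ'.mem_nhds hz)
  exact (h1.hasDerivAt.hasFDerivAt).restrictScalars ℝ

lemma contDiffAt_of_holo (hΩ' : IsOpen Ω') (hd : DifferentiableOn ℂ φ Ω') {z : ℂ} (hz : z ∈ Ω') :
    ContDiffAt ℝ (⊤ : ℕ∞) φ z :=
  ((hd.analyticAt (hΩ'.mem_nhds hz)).contDiffAt).restrict_scalars ℝ

lemma map_nhds_of_holo (hΩ' : IsOpen Ω') (hd : DifferentiableOn ℂ φ Ω') {z : ℂ}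
    (hz : z ∈ Ω') (hz' : deriv φ z ≠ 0) : Filter.map φ (nhds z) = nhds (φ z) := by
  have ha : AnalyticAt ℂ φ z := hd.analyticAt (hΩ'.mem_nhds hz)
  have hs : HasStrictDerivAt φ (deriv φ z) z := by
    rcases ha with ⟨p, hp⟩
    rw [hp.deriv]
    exact hp.hasStrictDerivAt
  have hsf : HasStrictFDerivAt φ
      ((ContinuousLinearEquiv.unitsEquivAut ℂ (Units.mk0 _ hz')) : ℂ →L[ℂ] ℂ) z := by
    have heq : ((ContinuousLinearEquiv.unitsEquivAut ℂ (Units.mk0 _ hz')) : ℂ →L[ℂ] ℂ) =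
        ContinuousLinearMap.toSpanSingleton ℂ (deriv φ z) := by
      ext; simp
    rw [heq]; exact hs.hasStrictFDerivAt
  exact hsf.map_nhds_eq_of_equiv

/-- Given a conformal-type map and a compact `K ⊆ φ '' Ω'`, the preimage of `K` in `Ω'`
is contained in a compact subset of `Ω'`. -/
lemma exists_compact_preimage (hΩ' : IsOpen Ω') (hd : DifferentiableOn ℂ φ Ω')
    (hinj : Set.InjOn φ Ω') (hder : ∀ z ∈ Ω', deriv φ z ≠ 0)
    {K : Set ℂ} (hK : IsCompact K) (hKΩ : K ⊆ φ '' Ω') :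
    ∃ C : Set ℂ, IsCompact C ∧ C ⊆ Ω' ∧ {z ∈ Ω' | φ z ∈ K} ⊆ C := by
  -- for each w ∈ K pick z ∈ Ω' with φ z = w, a closed ball around z inside Ω',
  -- whose image is a neighborhood of w
  have key : ∀ w ∈ K, ∃ z ∈ Ω', ∃ ε > 0, Metric.closedBall z ε ⊆ Ω' ∧
      φ '' Metric.ball z ε ∈ nhds w := by
    intro w hw
    obtain ⟨z, hz, rfl⟩ := hKΩ hw
    obtain ⟨ε, hε, hball⟩ := Metric.isOpen_iff.mp hΩ' z hz
    refine ⟨z, hz, ε / 2, by linarith, ?_, ?_⟩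
    · exact (Metric.closedBall_subset_ball (by linarith)).trans hball
    · rw [← map_nhds_of_holo hΩ' hd hz (hder z hz)]
      exact Filter.image_mem_map (Metric.ball_mem_nhds z (by linarith))
  choose! z hzΩ ε hε hball himg using key
  -- K is covered by the interiors of the images
  have hcov : K ⊆ ⋃ w ∈ K, interior (φ '' Metric.ball (z w) (ε w)) := by
    intro w hw
    exact Set.mem_biUnion hw (mem_interior_iff_mem_nhds.mpr (himg w hw))
  obtain ⟨t, htK, htfin, htcov⟩ := hK.elim_finite_subcover_image
    (fun w hw => isOpen_interior) hcov
  refine ⟨⋃ w ∈ t, Metric.closedBall (z w) (ε w), ?_, ?_, ?_⟩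
  · exact htfin.isCompact_biUnion fun w _ => isCompact_closedBall _ _
  · exact Set.iUnion₂_subset fun w hw => hball w (htK hw)
  · rintro x ⟨hxΩ, hxK⟩
    obtain ⟨w, hwt, hx⟩ := Set.mem_iUnion₂.mp (htcov hxK)
    have : φ x ∈ φ '' Metric.ball (z w) (ε w) := interior_subset hx
    obtain ⟨v, hv, hvx⟩ := this
    have hvΩ : v ∈ Ω' := (Metric.ball_subset_closedBall.trans (hball w (htK hwt))) hv
    have : x = v := hinj hxΩ hvΩ hvx.symm
    exact Set.mem_biUnion hwt (this ▸ Metric.ball_subset_closedBall hv)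

variable {Ω : Set ℂ} {f : ℂ → ℝ}

/-- fderiv of the composition with the conformal map, on `Ω'`. -/
lemma fderiv_comp_eq (hΩ' : IsOpen Ω') (hd : DifferentiableOn ℂ φ Ω')
    (hf : ContDiff ℝ (⊤ : ℕ∞) f) {z : ℂ} (hz : z ∈ Ω') :
    fderiv ℝ (f ∘ φ) z = (fderiv ℝ f (φ z)).comp (mulCLM (deriv φ z)) := by
  have h1 : HasFDerivAt φ (mulCLM (deriv φ z)) z := hasFDerivAt_mul hΩ' hd hz
  have h2 : HasFDerivAt f (fderiv ℝ f (φ z)) (φ z) :=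
    (hf.differentiable (by simp) (φ z)).hasFDerivAt
  exact (h2.comp z h1).fderiv

lemma comp_testfun (hΩ' : IsOpen Ω') (hd : DifferentiableOn ℂ φ Ω')
    (hinj : Set.InjOn φ Ω') (hder : ∀ z ∈ Ω', deriv φ z ≠ 0) (himg : φ '' Ω' = Ω)
    (hf : IsTestFun Ω f) :
    IsTestFun Ω' (fun z => if z ∈ Ω' then f (φ z) else 0) := by
  obtain ⟨hf1, hf2, hf3⟩ := hf
  set g : ℂ → ℝ := fun z => if z ∈ Ω' then f (φ z) else 0 with hgdef
  obtain ⟨C, hC, hCΩ, hCpre⟩ := exists_compact_preimage hΩ' hd hinj hder hf2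
    (hf3.trans himg.symm.subset)
  have hg0 : ∀ z ∉ C, g z = 0 := by
    intro x hx
    by_cases hxΩ : x ∈ Ω'
    · simp only [hgdef, if_pos hxΩ]
      by_contra h
      exact hx (hCpre ⟨hxΩ, subset_tsupport f h⟩)
    · simp [hgdef, hxΩ]
  have hsupp : Function.support g ⊆ C := fun x hx => by
    by_contra h; exact hx (hg0 x h)
  refine ⟨contDiff_iff_contDiffAt.mpr fun z => ?_, ?_, ?_⟩
  · 
    by_cases hz : z ∈ Ω'
    · have heq : g =ᶠ[nhds z] (f ∘ φ) := by
        filter_upwards [hΩ'.mem_nhds hz] with x hx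
        simp [hgdef, hx]
      exact ((hf1.contDiffAt.comp z (contDiffAt_of_holo hΩ' hd hz)).congr_of_eventuallyEq heq)
    · have hz' : z ∈ Cᶜ := fun h => hz (hCΩ h)
      have heq : g =ᶠ[nhds z] (fun _ => 0) := by
        filter_upwards [hC.isClosed.isOpen_compl.mem_nhds hz'] with x hx
        exact hg0 x hx
      exact contDiffAt_const.congr_of_eventuallyEq heq
  · exact HasCompactSupport.of_support_subset_isCompact hC hsupp
  · exact (closure_minimal hsupp hC.isClosed).trans hCΩ

lemma comp_testfun_fderiv (hΩ' : IsOpen Ω') (hd : DifferentiableOn ℂ φ Ω')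
    (hf : ContDiff ℝ (⊤ : ℕ∞) f) {z : ℂ} (hz : z ∈ Ω') :
    ‖fderiv ℝ (fun z => if z ∈ Ω' then f (φ z) else 0) z‖
      = ‖fderiv ℝ f (φ z)‖ * ‖deriv φ z‖ := by
  have heq : (fun z => if z ∈ Ω' then f (φ z) else 0) =ᶠ[nhds z] (f ∘ φ) := by
    filter_upwards [hΩ'.mem_nhds hz] with x hx
    simp [hx]
  rw [heq.fderiv_eq, fderiv_comp_eq hΩ' hd hf hz, opNorm_comp_mulCLM]

/-- Conversion: the `(1/r)`-power of the integral of `|h|^r` is the `toReal` of the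
`eLpNorm`. -/
lemma rpow_integral_eq_eLpNorm {h : ℂ → ℝ} (hc : Continuous h) (hcs : HasCompactSupport h)
    {r : ℝ} (hr : 0 < r) :
    (∫ z, |h z| ^ r) ^ (1 / r) = (eLpNorm h (ENNReal.ofReal r) volume).toReal := by
  have hr0 : ENNReal.ofReal r ≠ 0 := by simp [ENNReal.ofReal_eq_zero, not_le, hr]
  rw [eLpNorm_eq_lintegral_rpow_enorm_toReal hr0 ENNReal.ofReal_ne_top]
  rw [ENNReal.toReal_ofReal hr.le]
  have hint : ∫ z, |h z| ^ r = (∫⁻ z, (‖h z‖₊ : ℝ≥0∞) ^ r).toReal := by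
    rw [integral_eq_lintegral_of_nonneg_ae (Filter.Eventually.of_forall fun z => by positivity)
      ((hc.abs.rpow_const fun x => Or.inr hr.le).aestronglyMeasurable)]
    congr 1
    refine lintegral_congr fun z => ?_
    rw [← ENNReal.ofReal_rpow_of_nonneg (abs_nonneg _) hr.le]
    congr 1
    rw [← enorm_eq_nnnorm, ← ofReal_norm_eq_enorm, Real.norm_eq_abs]
  rw [hint, ENNReal.toReal_rpow]
  simp only [enorm_eq_nnnorm]

/-- Same for the gradient term with natural exponent `2`. -/
lemma rpow_integral_fderiv_eq_eLpNorm {f : ℂ → ℝ} (hf : ContDiff ℝ (⊤ : ℕ∞) f)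
    (hcs : HasCompactSupport f) :
    (∫ z, ‖fderiv ℝ f z‖ ^ 2) ^ (1/2 : ℝ) = (eLpNorm (fderiv ℝ f) 2 volume).toReal := by
  have hc : Continuous (fderiv ℝ f) := hf.continuous_fderiv (by simp)
  rw [eLpNorm_eq_lintegral_rpow_enorm_toReal (by norm_num) (by norm_num)]
  have h2 : (2 : ℝ≥0∞).toReal = (2 : ℝ) := by norm_num
  rw [h2]
  have hint : ∫ z, ‖fderiv ℝ f z‖ ^ 2 = (∫⁻ z, (‖fderiv ℝ f z‖₊ : ℝ≥0∞) ^ (2:ℝ)).toReal := by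
    rw [integral_eq_lintegral_of_nonneg_ae (f := fun z => ‖fderiv ℝ f z‖ ^ 2)
      (Filter.Eventually.of_forall fun z => by positivity)
      ((hc.norm.pow 2).aestronglyMeasurable)]
    congr 1
    refine lintegral_congr fun z => ?_
    rw [show ‖fderiv ℝ f z‖ ^ 2 = ‖fderiv ℝ f z‖ ^ (2:ℝ) by
      rw [← Real.rpow_natCast]; norm_num]
    rw [← ENNReal.ofReal_rpow_of_nonneg (norm_nonneg _) (by norm_num : (0:ℝ) ≤ 2)]
    rw [ofReal_norm_eq_enorm, enorm_eq_nnnorm]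
  rw [hint, ENNReal.toReal_rpow]
  simp only [enorm_eq_nnnorm]

lemma setIntegral_eq_integral_of_tsupport {D : Set ℂ} {f : ℂ → ℝ} (hf3 : tsupport f ⊆ D)
    {r : ℝ} (hr : 0 < r) :
    ∫ z in D, |f z| ^ r = ∫ z, |f z| ^ r := by
  refine setIntegral_eq_integral_of_forall_compl_eq_zero fun x hx => ?_
  have : f x = 0 := image_eq_zero_of_notMem_tsupport fun h => hx (hf3 h)
  rw [this, abs_zero, Real.zero_rpow hr.ne']

lemma setIntegral_fderiv_eq_integral_of_tsupport {D : Set ℂ} {f : ℂ → ℝ} (hf3 : tsupport f ⊆ D) :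
    ∫ z in D, ‖fderiv ℝ f z‖ ^ 2 = ∫ z, ‖fderiv ℝ f z‖ ^ 2 := by
  refine setIntegral_eq_integral_of_forall_compl_eq_zero fun x hx => ?_
  have hx' : x ∉ tsupport f := fun h => hx (hf3 h)
  have : fderiv ℝ f x = 0 := by
    by_contra h
    exact hx' (support_fderiv_subset ℝ h)
  simp [this]

/-- Existence of a Poincaré–Sobolev constant on a bounded planar domain. -/
lemma exists_PS_const {D : Set ℂ} (hD : Bornology.IsBounded D) {r : ℝ} (hr : 1 ≤ r) :
    ∃ A : ℝ, 0 ≤ A ∧ ∀ f : ℂ → ℝ, IsTestFun D f →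
      (∫ z in D, |f z| ^ r) ^ (1 / r) ≤ A * (∫ z in D, ‖fderiv ℝ f z‖ ^ 2) ^ (1/2 : ℝ) := by
  have hr0 : (0:ℝ) < r := lt_of_lt_of_le one_pos hr
  set rn : ℝ≥0 := r.toNNReal with hrn_def
  have hrn1 : 1 ≤ rn := by
    rw [hrn_def, ← Real.toNNReal_one]
    exact Real.toNNReal_mono hr
  have hrn0 : rn ≠ 0 := by positivity
  set m : ℝ≥0 := min 2⁻¹ rn⁻¹ with hm_def
  have hm0 : 0 < m := lt_min (by norm_num) (by positivity)
  set p : ℝ≥0 := (2⁻¹ + m)⁻¹ with hp_def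
  have hden0 : (0:ℝ≥0) < 2⁻¹ + m := by positivity
  have hpinv : p⁻¹ = 2⁻¹ + m := by rw [hp_def, inv_inv]
  have hp1 : 1 ≤ p := by
    rw [hp_def]
    have h1 : (2⁻¹ + m : ℝ≥0) ≤ 1 := by
      calc (2⁻¹ + m : ℝ≥0) ≤ 2⁻¹ + 2⁻¹ := by gcongr; exact min_le_left _ _
        _ = 1 := by rw [← NNReal.coe_inj]; push_cast; norm_num
    calc (1:ℝ≥0) = 1⁻¹ := by norm_num
      _ ≤ (2⁻¹ + m)⁻¹ := by gcongr
  have hp2 : p < 2 := by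
    have h1 : (2:ℝ≥0)⁻¹ < p⁻¹ := by
      rw [hpinv]; exact lt_add_of_pos_right _ hm0
    have hp0 : 0 < p := by rw [hp_def]; positivity
    exact (inv_lt_inv₀ (by norm_num) hp0).mp h1
  have hfr : Module.finrank ℝ ℂ = 2 := Complex.finrank_real_complex
  -- constants
  set C₁ : ℝ≥0 := eLpNormLESNormFDerivOfLeConst ℝ volume D p rn with hC₁def
  have hvolD : volume D < ∞ := hD.measure_lt_top
  have hexp : (0:ℝ) ≤ 1/(p:ℝ) - 1/2 := by
    have : ((2:ℝ≥0):ℝ)⁻¹ ≤ ((p:ℝ))⁻¹ := by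
      have : (p:ℝ) ≤ ((2:ℝ≥0):ℝ) := by exact_mod_cast hp2.le
      exact inv_anti₀ (by positivity) this
    simp only [one_div]
    push_cast at this ⊢
    linarith
  set C₂ : ℝ≥0∞ := (volume D) ^ (1/(p:ℝ) - 1/2) with hC₂def
  have hC₂top : C₂ ≠ ∞ := by
    rw [hC₂def]
    exact (ENNReal.rpow_lt_top_of_nonneg hexp hvolD.ne).ne
  refine ⟨((C₁ : ℝ≥0∞) * C₂).toReal, ENNReal.toReal_nonneg, ?_⟩
  rintro f ⟨hf1, hf2, hf3⟩
  have hfc : Continuous f := hf1.continuous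
  have hsupp : Function.support f ⊆ D := (subset_tsupport f).trans hf3
  have hsupp' : Function.support (fderiv ℝ f) ⊆ D :=
    (support_fderiv_subset ℝ).trans hf3
  -- GNS inequality
  have hGNS : eLpNorm f rn volume ≤
      C₁ * eLpNorm (fderiv ℝ f) p volume := by
    refine eLpNorm_le_eLpNorm_fderiv_of_le volume (hf1.of_le (by exact_mod_cast le_top)) hsupp
      hp1 ?_ ?_ hD
    · rw [hfr]; exact_mod_cast hp2
    · rw [hfr]
      have h1 : ((p:ℝ))⁻¹ = 2⁻¹ + (m:ℝ) := by
        rw [← NNReal.coe_inv, hpinv]; push_cast; ring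
      have h2 : (m:ℝ) ≤ ((rn:ℝ))⁻¹ := by
        have := min_le_right (2⁻¹ : ℝ≥0) rn⁻¹
        exact_mod_cast this
      push_cast
      rw [h1]
      push_cast
      linarith
  -- compare L^p and L^2 norms of the gradient
  have hcmp : eLpNorm (fderiv ℝ f) p volume ≤ C₂ * eLpNorm (fderiv ℝ f) 2 volume := by
    have hmeas : AEStronglyMeasurable (fderiv ℝ f) (volume.restrict D) :=
      (hf1.continuous_fderiv (by simp)).aestronglyMeasurable
    have hple : ((p : ℝ≥0∞)) ≤ 2 := by exact_mod_cast hp2.le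
    calc eLpNorm (fderiv ℝ f) p volume
        = eLpNorm (fderiv ℝ f) p (volume.restrict D) :=
          (eLpNorm_restrict_eq_of_support_subset (ε := ℂ →L[ℝ] ℝ) hsupp').symm
      _ ≤ eLpNorm (fderiv ℝ f) 2 (volume.restrict D) *
          (volume.restrict D Set.univ) ^ (1/(p:ℝ).toNNReal - 1/(2:ℝ≥0∞).toReal : ℝ) := by
          have := eLpNorm_le_eLpNorm_mul_rpow_measure_univ (μ := volume.restrict D)
            (p := (p : ℝ≥0∞)) (q := 2) hple hmeas
          convert this using 2 <;> simp
      _ = C₂ * eLpNorm (fderiv ℝ f) 2 volume := by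
          rw [eLpNorm_restrict_eq_of_support_subset (ε := ℂ →L[ℝ] ℝ) hsupp', mul_comm]
          congr 1
          rw [hC₂def, Measure.restrict_apply_univ]
          norm_num
  have hfin : eLpNorm (fderiv ℝ f) 2 volume ≠ ∞ :=
    ((hf1.continuous_fderiv (by simp)).memLp_of_hasCompactSupport
      (hf2.fderiv ℝ)).eLpNorm_lt_top.ne
  have main : eLpNorm f rn volume ≤ (C₁ * C₂) * eLpNorm (fderiv ℝ f) 2 volume := by
    calc eLpNorm f rn volume ≤ C₁ * eLpNorm (fderiv ℝ f) p volume := hGNS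
      _ ≤ C₁ * (C₂ * eLpNorm (fderiv ℝ f) 2 volume) := by gcongr
      _ = (C₁ * C₂) * eLpNorm (fderiv ℝ f) 2 volume := by ring
  -- convert to real integrals
  rw [setIntegral_eq_integral_of_tsupport hf3 hr0, setIntegral_fderiv_eq_integral_of_tsupport hf3]
  rw [rpow_integral_eq_eLpNorm hfc hf2 hr0, rpow_integral_fderiv_eq_eLpNorm hf1 hf2]
  have hofreal : ENNReal.ofReal r = (rn : ℝ≥0∞) := rfl
  rw [hofreal]
  have hne : (C₁ : ℝ≥0∞) * C₂ * eLpNorm (fderiv ℝ f) 2 volume ≠ ∞ :=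
    ENNReal.mul_ne_top (ENNReal.mul_ne_top ENNReal.coe_ne_top hC₂top) hfin
  calc (eLpNorm f rn volume).toReal
      ≤ ((C₁ : ℝ≥0∞) * C₂ * eLpNorm (fderiv ℝ f) 2 volume).toReal := ENNReal.toReal_mono hne main
    _ = ((C₁ : ℝ≥0∞) * C₂).toReal * (eLpNorm (fderiv ℝ f) 2 volume).toReal := by
        rw [ENNReal.toReal_mul]

lemma bestPSConst_nonneg (D : Set ℂ) (r : ℝ) : 0 ≤ bestPSConst D r :=
  Real.sInf_nonneg fun _ hA => hA.1

lemma bestPSConst_spec {D : Set ℂ} (hD : Bornology.IsBounded D) {r : ℝ} (hr : 1 ≤ r)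
    {g : ℂ → ℝ} (hg : IsTestFun D g) :
    (∫ z in D, |g z| ^ r) ^ (1 / r) ≤
      bestPSConst D r * (∫ z in D, ‖fderiv ℝ g z‖ ^ 2) ^ (1/2 : ℝ) := by
  set S := {A : ℝ | 0 ≤ A ∧ ∀ f : ℂ → ℝ, IsTestFun D f →
    (∫ z in D, |f z| ^ r) ^ (1 / r) ≤ A * (∫ z in D, ‖fderiv ℝ f z‖ ^ 2) ^ (1/2 : ℝ)} with hS
  have hSne : S.Nonempty := by
    obtain ⟨A, hA0, hA⟩ := exists_PS_const hD hr
    exact ⟨A, hA0, hA⟩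
  have hSbdd : BddBelow S := ⟨0, fun A hA => hA.1⟩
  set B := (∫ z in D, ‖fderiv ℝ g z‖ ^ 2) ^ (1/2 : ℝ) with hB
  have hB0 : 0 ≤ B := Real.rpow_nonneg (integral_nonneg fun z => by positivity) _
  rcases hB0.eq_or_lt with hB' | hB'
  · obtain ⟨A, hA0, hA⟩ := hSne
    calc (∫ z in D, |g z| ^ r) ^ (1 / r) ≤ A * B := hA g hg
      _ = 0 := by rw [← hB']; ring
      _ ≤ bestPSConst D r * B := by rw [← hB']; ring_nf; exact le_refl 0
  · have key : (∫ z in D, |g z| ^ r) ^ (1 / r) / B ≤ bestPSConst D r := by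
      refine le_csInf hSne fun A hA => ?_
      rw [div_le_iff₀ hB']
      exact hA.2 g hg
    calc (∫ z in D, |g z| ^ r) ^ (1 / r)
        = ((∫ z in D, |g z| ^ r) ^ (1 / r) / B) * B := by field_simp
      _ ≤ bestPSConst D r * B := mul_le_mul_of_nonneg_right key hB0

/-- Change of variables for a conformal map. -/
lemma integral_image_conformal (hΩ' : IsOpen Ω') (hd : DifferentiableOn ℂ φ Ω')
    (hinj : Set.InjOn φ Ω') (h : ℂ → ℝ) :
    ∫ w in φ '' Ω', h w = ∫ z in Ω', ‖deriv φ z‖ ^ (2:ℝ) * h (φ z) := by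
  rw [integral_image_eq_integral_abs_det_fderiv_smul volume hΩ'.measurableSet
    (fun z hz => (hasFDerivAt_mul hΩ' hd hz).hasFDerivWithinAt) hinj h]
  refine setIntegral_congr_fun hΩ'.measurableSet fun z hz => ?_
  rw [smul_eq_mul]
  congr 1
  exact abs_det_mulCLM _

lemma memLp_deriv_sq {α : ℝ} (hα : 2 < α)
    (hreg : IntegrableOn (fun z => ‖deriv φ z‖ ^ α) Ω') :
    MemLp (fun z => ‖deriv φ z‖ ^ (2:ℝ)) (ENNReal.ofReal (α/2)) (volume.restrict Ω') := by
  have hα0 : (0:ℝ) < α := by linarith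
  have hcont : Continuous (fun x : ℝ => x ^ (2/α)) :=
    continuous_iff_continuousAt.mpr fun x => Real.continuousAt_rpow_const x _ (Or.inr (by positivity))
  have heq : ∀ z : ℂ, (‖deriv φ z‖ ^ α) ^ (2/α) = ‖deriv φ z‖ ^ (2:ℝ) := fun z => by
    rw [← Real.rpow_mul (norm_nonneg _)]
    congr 1
    field_simp
  constructor
  · have h1 : AEStronglyMeasurable (fun z => ‖deriv φ z‖ ^ α) (volume.restrict Ω') :=
      hreg.aestronglyMeasurable
    have h2 : AEStronglyMeasurable (fun z => (‖deriv φ z‖ ^ α) ^ (2/α)) (volume.restrict Ω') :=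
      hcont.comp_aestronglyMeasurable h1
    exact h2.congr (Filter.Eventually.of_forall fun z => heq z)
  · have hofr0 : ENNReal.ofReal (α/2) ≠ 0 := by
      simp only [ne_eq, ENNReal.ofReal_eq_zero, not_le]
      positivity
    rw [eLpNorm_eq_lintegral_rpow_enorm_toReal hofr0 ENNReal.ofReal_ne_top]
    rw [ENNReal.toReal_ofReal (by positivity)]
    refine ENNReal.rpow_lt_top_of_nonneg (by positivity) ?_
    have hpt : ∀ z : ℂ, (‖(fun z => ‖deriv φ z‖ ^ (2:ℝ)) z‖₊ : ℝ≥0∞) ^ (α/2)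
        = (‖(fun z => ‖deriv φ z‖ ^ α) z‖₊ : ℝ≥0∞) := fun z => by
      simp only
      rw [← enorm_eq_nnnorm, ← enorm_eq_nnnorm, ← ofReal_norm_eq_enorm, ← ofReal_norm_eq_enorm]
      rw [Real.norm_of_nonneg (by positivity), Real.norm_of_nonneg (by positivity)]
      rw [ENNReal.ofReal_rpow_of_nonneg (by positivity) (by positivity)]
      congr 1
      rw [← Real.rpow_mul (norm_nonneg _)]
      congr 1
      field_simp
    have hlt : (∫⁻ z, (‖(fun z => ‖deriv φ z‖ ^ (2:ℝ)) z‖₊ : ℝ≥0∞) ^ (α/2) ∂(volume.restrict Ω'))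
        < ∞ := by
      calc (∫⁻ z, (‖(fun z => ‖deriv φ z‖ ^ (2:ℝ)) z‖₊ : ℝ≥0∞) ^ (α/2) ∂(volume.restrict Ω'))
          = ∫⁻ z, (‖(fun z => ‖deriv φ z‖ ^ α) z‖₊ : ℝ≥0∞) ∂(volume.restrict Ω') :=
            lintegral_congr fun z => hpt z
        _ < ∞ := hreg.2
    exact hlt.ne

lemma memLp_abs_rpow {g : ℂ → ℝ} (hgc : Continuous g) (hgs : HasCompactSupport g)
    {s : ℝ} (hs0 : 0 < s) (q : ℝ≥0∞) :
    MemLp (fun z => |g z| ^ s) q (volume.restrict Ω') := by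
  have hcont : Continuous (fun z => |g z| ^ s) :=
    hgc.abs.rpow_const fun x => Or.inr hs0.le
  have hcs : HasCompactSupport (fun z => |g z| ^ s) := by
    have : (fun z => |g z| ^ s) = (fun x : ℝ => |x| ^ s) ∘ g := rfl
    rw [this]
    exact hgs.comp_left (by simp [Real.zero_rpow hs0.ne'])
  exact (hcont.memLp_of_hasCompactSupport hcs).restrict _

lemma core_ineq {α : ℝ} (hα : 2 < α) (hΩ' : IsOpen Ω') (hΩ'bdd : Bornology.IsBounded Ω')
    (hd : DifferentiableOn ℂ φ Ω') (hinj : Set.InjOn φ Ω') (himg : φ '' Ω' = Ω)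
    (hder : ∀ z ∈ Ω', deriv φ z ≠ 0)
    (hreg : IntegrableOn (fun z => ‖deriv φ z‖ ^ α) Ω')
    {s : ℝ} (hs : 1 ≤ s) {f : ℂ → ℝ} (hf : IsTestFun Ω f) :
    (∫ w in Ω, |f w| ^ s) ^ (1 / s) ≤
      bestPSConst Ω' (α * s / (α - 2)) *
        ((∫ z in Ω', ‖deriv φ z‖ ^ α) ^ (1 / α)) ^ (2 / s) *
          (∫ w in Ω, ‖fderiv ℝ f w‖ ^ 2) ^ (1/2 : ℝ) := by
  have hα2 : (0:ℝ) < α - 2 := by linarith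
  have hα0 : (0:ℝ) < α := by linarith
  have hs0 : (0:ℝ) < s := by linarith
  set r : ℝ := α * s / (α - 2) with hrdef
  have hr1 : 1 ≤ r := by
    rw [hrdef, le_div_iff₀ hα2]
    nlinarith
  have hr0 : (0:ℝ) < r := by linarith
  set g : ℂ → ℝ := fun z => if z ∈ Ω' then f (φ z) else 0 with hgdef
  have hg : IsTestFun Ω' g := comp_testfun hΩ' hd hinj hder himg hf
  have hgeq : ∀ z ∈ Ω', g z = f (φ z) := fun z hz => by simp [hgdef, hz]
  -- change of variables
  have step1 : ∫ w in Ω, |f w| ^ s = ∫ z in Ω', ‖deriv φ z‖ ^ (2:ℝ) * |g z| ^ s := by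
    rw [← himg, integral_image_conformal hΩ' hd hinj (fun w => |f w| ^ s)]
    refine setIntegral_congr_fun hΩ'.measurableSet fun z hz => ?_
    rw [hgeq z hz]
  have step2 : ∫ w in Ω, ‖fderiv ℝ f w‖ ^ 2 = ∫ z in Ω', ‖fderiv ℝ g z‖ ^ 2 := by
    rw [← himg, integral_image_conformal hΩ' hd hinj (fun w => ‖fderiv ℝ f w‖ ^ 2)]
    refine setIntegral_congr_fun hΩ'.measurableSet fun z hz => ?_
    rw [hgdef]
    rw [comp_testfun_fderiv hΩ' hd hf.1 hz]
    rw [show ‖deriv φ z‖ ^ (2:ℝ) = ‖deriv φ z‖ ^ (2:ℕ) from by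
      rw [← Real.rpow_natCast]; norm_num]
    ring
  -- Hölder
  have hconj : Real.HolderConjugate (α/2) (α/(α-2)) := by
    rw [Real.holderConjugate_iff]
    constructor
    · rw [lt_div_iff₀ (by norm_num : (0:ℝ) < 2)]; linarith
    · field_simp; ring
  have hH := integral_mul_le_Lp_mul_Lq_of_nonneg (μ := volume.restrict Ω') hconj
    (Filter.Eventually.of_forall fun z => Real.rpow_nonneg (norm_nonneg _) _)
    (Filter.Eventually.of_forall fun z => Real.rpow_nonneg (abs_nonneg _) _)
    (memLp_deriv_sq hα hreg)
    (memLp_abs_rpow hg.1.continuous hg.2.1 hs0 _)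
  have eqA : ∫ z in Ω', ((‖deriv φ z‖ ^ (2:ℝ)) ^ (α/2)) = ∫ z in Ω', ‖deriv φ z‖ ^ α := by
    refine setIntegral_congr_fun hΩ'.measurableSet fun z hz => ?_
    rw [← Real.rpow_mul (norm_nonneg _)]
    congr 1
    field_simp
  have eqB : ∫ z in Ω', ((|g z| ^ s) ^ (α/(α-2))) = ∫ z in Ω', |g z| ^ r := by
    refine setIntegral_congr_fun hΩ'.measurableSet fun z hz => ?_
    rw [← Real.rpow_mul (abs_nonneg _)]
    congr 1
    rw [hrdef]
    field_simp
  rw [eqA, eqB] at hH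
  set I : ℝ := ∫ z in Ω', ‖deriv φ z‖ ^ α with hIdef
  set G : ℝ := ∫ z in Ω', |g z| ^ r with hGdef
  set N : ℝ := ∫ z in Ω', ‖fderiv ℝ g z‖ ^ 2 with hNdef
  have hI0 : 0 ≤ I := integral_nonneg fun z => Real.rpow_nonneg (norm_nonneg _) _
  have hG0 : 0 ≤ G := integral_nonneg fun z => Real.rpow_nonneg (abs_nonneg _) _
  have hN0 : 0 ≤ N := integral_nonneg fun z => by positivity
  have hfs0 : 0 ≤ ∫ w in Ω, |f w| ^ s :=
    integral_nonneg fun w => Real.rpow_nonneg (abs_nonneg _) _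
  -- combine
  have key0 : ∫ w in Ω, |f w| ^ s ≤ I ^ (2/α) * G ^ ((α-2)/α) := by
    rw [step1]
    calc ∫ z in Ω', ‖deriv φ z‖ ^ (2:ℝ) * |g z| ^ s
        ≤ I ^ (1/(α/2)) * G ^ (1/(α/(α-2))) := hH
      _ = I ^ (2/α) * G ^ ((α-2)/α) := by rw [one_div_div, one_div_div]
  have key1 : (∫ w in Ω, |f w| ^ s) ^ (1/s) ≤ (I ^ (2/α) * G ^ ((α-2)/α)) ^ (1/s) :=
    Real.rpow_le_rpow hfs0 key0 (by positivity)
  have key2 : (I ^ (2/α) * G ^ ((α-2)/α)) ^ (1/s)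
      = (I ^ (1/α)) ^ (2/s) * G ^ (1/r) := by
    rw [Real.mul_rpow (Real.rpow_nonneg hI0 _) (Real.rpow_nonneg hG0 _)]
    congr 1
    · rw [← Real.rpow_mul hI0, ← Real.rpow_mul hI0]
      congr 1
      ring
    · rw [← Real.rpow_mul hG0]
      congr 1
      rw [hrdef]
      field_simp
  have E4 : G ^ (1/r) ≤ bestPSConst Ω' r * N ^ (1/2 : ℝ) := bestPSConst_spec hΩ'bdd hr1 hg
  calc (∫ w in Ω, |f w| ^ s) ^ (1/s)
      ≤ (I ^ (1/α)) ^ (2/s) * G ^ (1/r) := by rw [← key2]; exact key1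
    _ ≤ (I ^ (1/α)) ^ (2/s) * (bestPSConst Ω' r * N ^ (1/2 : ℝ)) := by
        refine mul_le_mul_of_nonneg_left E4 (Real.rpow_nonneg (Real.rpow_nonneg hI0 _) _)
    _ = bestPSConst Ω' r * (I ^ (1/α)) ^ (2/s) * N ^ (1/2 : ℝ) := by ring
    _ = bestPSConst Ω' r * (I ^ (1/α)) ^ (2/s) *
        (∫ w in Ω, ‖fderiv ℝ f w‖ ^ 2) ^ (1/2 : ℝ) := by rw [step2]

/-- Poincaré–Sobolev inequality in a conformal `α`-regular domain, with constant
`A_{s,2}(Ω) ≤ A_{αs/(α−2),2}(Ω') · ‖φ' | L^α(Ω')‖^{2/s}`. -/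
theorem poincare_sobolev_alpha_regular
    (Ω Ω' : Set ℂ) (φ : ℂ → ℂ) (α : ℝ) (hα : 2 < α)
    (hΩ : IsOpen Ω) (hΩ' : IsOpen Ω')
    (hΩc : IsConnected Ω) (hΩ'c : IsConnected Ω')
    (hΩsc : SimplyConnectedSpace Ω) (hΩ'sc : SimplyConnectedSpace Ω')
    (hΩ'bdd : Bornology.IsBounded Ω')
    (hφ : ConformalOn φ Ω' Ω)
    -- conformal `α`-regularity: `∬_{Ω'} |φ'|^α < ∞`
    (hreg : IntegrableOn (fun z => ‖deriv φ z‖ ^ α) Ω')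
    (s : ℝ) (hs : 1 ≤ s) :
    (∀ f : ℂ → ℝ, IsTestFun Ω f →
      (∫ w in Ω, |f w| ^ s) ^ (1 / s) ≤
        bestPSConst Ω' (α * s / (α - 2)) *
          ((∫ z in Ω', ‖deriv φ z‖ ^ α) ^ (1 / α)) ^ (2 / s) *
            (∫ w in Ω, ‖fderiv ℝ f w‖ ^ 2) ^ (1/2 : ℝ)) ∧
    bestPSConst Ω s ≤
      bestPSConst Ω' (α * s / (α - 2)) *
        ((∫ z in Ω', ‖deriv φ z‖ ^ α) ^ (1 / α)) ^ (2 / s) := by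
  obtain ⟨hd, hinj, himg, hder⟩ := hφ
  have part1 : ∀ f : ℂ → ℝ, IsTestFun Ω f →
      (∫ w in Ω, |f w| ^ s) ^ (1 / s) ≤
        bestPSConst Ω' (α * s / (α - 2)) *
          ((∫ z in Ω', ‖deriv φ z‖ ^ α) ^ (1 / α)) ^ (2 / s) *
            (∫ w in Ω, ‖fderiv ℝ f w‖ ^ 2) ^ (1/2 : ℝ) :=
    fun f hf => core_ineq hα hΩ' hΩ'bdd hd hinj himg hder hreg hs hf
  refine ⟨part1, ?_⟩
  have hI0 : 0 ≤ ∫ z in Ω', ‖deriv φ z‖ ^ α :=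
    integral_nonneg fun z => Real.rpow_nonneg (norm_nonneg _) _
  have hC0 : 0 ≤ bestPSConst Ω' (α * s / (α - 2)) *
      ((∫ z in Ω', ‖deriv φ z‖ ^ α) ^ (1 / α)) ^ (2 / s) :=
    mul_nonneg (bestPSConst_nonneg _ _) (Real.rpow_nonneg (Real.rpow_nonneg hI0 _) _)
  exact csInf_le ⟨0, fun A hA => hA.1⟩ ⟨hC0, part1⟩
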